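/- arXiv:1111.0775 — 3 statements merged into one kernel-verified Lean document; each statement's English description precedes it below -/
import Mathlib

section
/- Let G be a finitely generated group with a finite symmetric generating set X, and let L = Geo(G,X). If w ∼_L w² for every nonempty word w over X (i.e. the syntactic semigroup of Geo(G,X) is idempotent), then G is a free abelian group (isomorphic to ℤⁿ for some n ≥ 0). -/
/-- `pre_{k-1}`, `suf_{k-1}` and `sub_k` agree: the equivalence `∼_k` on words. -/
def SimK {A : Type*} (k : ℕ) (u v : List A) : Prop :=
  u.take (k - 1) = v.take (k - 1) ∧
  u.drop (u.length - (k - 1)) = v.drop (v.length - (k - 1)) ∧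
  ∀ s : List A, s.length = k → (s <:+: u ↔ s <:+: v)

/-- A language `L` is `k`-locally testable if membership is invariant under `∼_k`. -/
def LocallyTestable {A : Type*} (k : ℕ) (L : Set (List A)) : Prop :=
  ∀ u v : List A, SimK k u v → (u ∈ L ↔ v ∈ L)

/-- The syntactic congruence of a language: `u ∼_L v` iff `sut ∈ L ↔ svt ∈ L` for all `s, t`. -/
def SynCong {A : Type*} (L : Set (List A)) (u v : List A) : Prop :=
  ∀ s t : List A, s ++ u ++ t ∈ L ↔ s ++ v ++ t ∈ L

/-- The element of `G` represented by a word over the generating set `X`. -/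
def wordProd {G : Type*} [Group G] {X : Set G} (w : List X) : G :=
  (w.map Subtype.val).prod

/-- A word over `X` is geodesic if no word representing the same element is shorter. -/
def IsGeodesic {G : Type*} [Group G] (X : Set G) (w : List X) : Prop :=
  ∀ v : List X, wordProd v = wordProd w → w.length ≤ v.length

/-- The language of all geodesic words over `X`. -/
def Geo {G : Type*} [Group G] (X : Set G) : Set (List X) :=
  {w | IsGeodesic X w}

/-- The `j`-th power of a word in the free monoid (concatenation of `j` copies). -/
def listPow {A : Type*} (w : List A) : ℕ → List A
  | 0 => []
  | n + 1 => w ++ listPow w n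

/-!
Idempotence of the syntactic semigroup makes every power of a geodesic word geodesic, so the word
length `ℓ` is homogeneous: `ℓ (g ^ n) = n * ℓ g`. Hence `G` is torsion-free, and since `(b * a) ^ n`
is conjugate to `(a * b) ^ n`, homogeneity and subadditivity force `ℓ (a * b) = ℓ (b * a)`: `ℓ` is a
class function. Conjugacy classes thus lie in finite balls, so centralizers, and with them the
centre of the finitely generated group `G`, have finite index. The transfer `g ↦ g ^ [G : Z(G)]`
into the centre is then an injective homomorphism into an abelian group, so `G` is a finitely
generated torsion-free abelian group, i.e. some `ℤⁿ`.
-/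

open Subgroup

theorem Nat.le_of_forall_mul_le_mul_add {x y C : ℕ} (h : ∀ n, n * x ≤ n * y + C) : x ≤ y := by
  by_contra! hlt
  have := h (C + 1)
  nlinarith

theorem CommGroup.exists_mulEquiv_multiplicative_fin_pi_int (G : Type*) [CommGroup G]
    [Group.FG G] [IsMulTorsionFree G] : ∃ n : ℕ, Nonempty (G ≃* Multiplicative (Fin n → ℤ)) := by
  obtain ⟨n, b⟩ := Module.basisOfFiniteTypeTorsionFree' (R := ℤ) (M := Additive G)
  exact ⟨n, ⟨AddEquiv.toMultiplicativeRight b.equivFun.toAddEquiv⟩⟩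

namespace Subgroup

variable {G : Type*} [Group G]

theorem finiteIndex_centralizer_of_finite_carrier {g : G}
    (h : (ConjClasses.mk g).carrier.Finite) : (centralizer {g}).FiniteIndex := by
  have hindex := MulAction.index_stabilizer (ConjAct G) g
  rw [ConjAct.stabilizer_eq_centralizer, ConjAct.orbit_eq_carrier_conjClasses] at hindex
  constructor
  change (centralizer {ConjAct.toConjAct g}).index ≠ 0
  rw [hindex]
  exact ((Set.ncard_pos h).2 ⟨g, ConjClasses.mem_carrier_mk⟩).ne'

theorem finiteIndex_center_of_forall_finiteIndex_centralizer [Group.FG G]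
    (h : ∀ g : G, (centralizer {g}).FiniteIndex) : (center G).FiniteIndex := by
  obtain ⟨S, hS⟩ := Group.FG.out (G := G)
  rw [center_eq_iInf hS]
  exact finiteIndex_iInf' _ fun g _ => h g

end Subgroup

theorem mul_comm_of_finiteIndex_center {G : Type*} [Group G] [(center G).FiniteIndex]
    (htf : ∀ (g : G) (n : ℕ), n ≠ 0 → g ^ n = 1 → g = 1) (a b : G) : a * b = b * a := by
  have hinj : Function.Injective (MonoidHom.transferCenterPow G) := by
    refine (injective_iff_map_eq_one _).2 fun g hg =>
      htf g _ (FiniteIndex.index_ne_zero (H := center G)) ?_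
    simpa [hg] using (MonoidHom.transferCenterPow_apply g).symm
  exact hinj (by rw [map_mul, map_mul, mul_comm' (MonoidHom.transferCenterPow G a)])

section HomogeneousLength

variable {G : Type*} [Group G] {ℓ : G → ℕ}

theorem eq_one_of_pow_eq_one_of_homogeneous (hpow : ∀ (g : G) (n : ℕ), ℓ (g ^ n) = n * ℓ g)
    (hdef : ∀ g, ℓ g = 0 → g = 1) {g : G} {n : ℕ} (hn : n ≠ 0) (hg : g ^ n = 1) : g = 1 := by
  have hone : ℓ 1 = 0 := by simpa using hpow 1 0
  refine hdef g ?_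
  simpa [hg, hone, hn] using (hpow g n).symm

theorem length_mul_comm_le_of_homogeneous (hmul : ∀ a b : G, ℓ (a * b) ≤ ℓ a + ℓ b)
    (hpow : ∀ (g : G) (n : ℕ), ℓ (g ^ n) = n * ℓ g) (a b : G) : ℓ (b * a) ≤ ℓ (a * b) := by
  refine Nat.le_of_forall_mul_le_mul_add (C := ℓ a⁻¹ + ℓ a) fun n => ?_
  have hconj : (b * a) ^ n = a⁻¹ * (a * b) ^ n * a := by
    simpa using conj_pow (a := a⁻¹) (b := a * b) (i := n)
  calc n * ℓ (b * a) = ℓ (a⁻¹ * (a * b) ^ n * a) := by rw [← hpow, hconj]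
    _ ≤ ℓ a⁻¹ + ℓ ((a * b) ^ n) + ℓ a := (hmul _ _).trans (by gcongr; exact hmul _ _)
    _ = n * ℓ (a * b) + (ℓ a⁻¹ + ℓ a) := by rw [hpow]; ring

theorem length_conj_of_homogeneous (hmul : ∀ a b : G, ℓ (a * b) ≤ ℓ a + ℓ b)
    (hpow : ∀ (g : G) (n : ℕ), ℓ (g ^ n) = n * ℓ g) (a g : G) : ℓ (a * g * a⁻¹) = ℓ g := by
  have h := le_antisymm (length_mul_comm_le_of_homogeneous hmul hpow a⁻¹ (a * g))
    (length_mul_comm_le_of_homogeneous hmul hpow (a * g) a⁻¹)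
  rwa [inv_mul_cancel_left] at h

theorem mul_comm_of_homogeneous [Group.FG G] (hmul : ∀ a b : G, ℓ (a * b) ≤ ℓ a + ℓ b)
    (hpow : ∀ (g : G) (n : ℕ), ℓ (g ^ n) = n * ℓ g) (hdef : ∀ g, ℓ g = 0 → g = 1)
    (hball : ∀ n, {g | ℓ g ≤ n}.Finite) (a b : G) : a * b = b * a := by
  have hcarrier (g : G) : (ConjClasses.mk g).carrier.Finite := by
    refine (hball (ℓ g)).subset fun x hx => ?_
    obtain ⟨c, rfl⟩ := isConj_iff.1 (ConjClasses.mk_eq_mk_iff_isConj.1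
      (ConjClasses.mem_carrier_iff_mk_eq.1 hx)).symm
    exact (length_conj_of_homogeneous hmul hpow c g).le
  have := finiteIndex_center_of_forall_finiteIndex_centralizer fun g =>
    finiteIndex_centralizer_of_finite_carrier (hcarrier g)
  exact mul_comm_of_finiteIndex_center
    (fun g n hn => eq_one_of_pow_eq_one_of_homogeneous hpow hdef hn) a b

theorem exists_mulEquiv_multiplicative_fin_pi_int_of_homogeneous [Group.FG G]
    (hmul : ∀ a b : G, ℓ (a * b) ≤ ℓ a + ℓ b) (hpow : ∀ (g : G) (n : ℕ), ℓ (g ^ n) = n * ℓ g)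
    (hdef : ∀ g, ℓ g = 0 → g = 1) (hball : ∀ n, {g | ℓ g ≤ n}.Finite) :
    ∃ n : ℕ, Nonempty (G ≃* Multiplicative (Fin n → ℤ)) := by
  let _ : CommGroup G := { mul_comm := mul_comm_of_homogeneous hmul hpow hdef hball }
  have : IsMulTorsionFree G := IsMulTorsionFree.of_not_isOfFinOrder fun g hg hfin => by
    obtain ⟨n, hn, hgn⟩ := isOfFinOrder_iff_pow_eq_one.1 hfin
    exact hg (eq_one_of_pow_eq_one_of_homogeneous hpow hdef hn.ne' hgn)
  exact CommGroup.exists_mulEquiv_multiplicative_fin_pi_int G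

end HomogeneousLength

theorem listPow_succ_mem_of_synCong {A : Type*} {L : Set (List A)} {w : List A}
    (h : SynCong L w (w ++ w)) (hw : w ∈ L) (n : ℕ) : listPow w (n + 1) ∈ L := by
  induction n with
  | zero => simpa [listPow] using hw
  | succ n ih => simpa [listPow] using (h [] (listPow w n)).1 (by simpa [listPow] using ih)

theorem length_listPow {A : Type*} (w : List A) (n : ℕ) : (listPow w n).length = n * w.length := by
  induction n with
  | zero => simp [listPow]
  | succ n ih => simp [listPow, ih]; ring

section WordLength

variable {G : Type*} [Group G] {X : Set G}

@[simp]
theorem wordProd_nil : wordProd ([] : List X) = 1 := rfl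

@[simp]
theorem wordProd_append (u v : List X) : wordProd (u ++ v) = wordProd u * wordProd v := by
  simp [wordProd]

theorem wordProd_listPow (w : List X) (n : ℕ) : wordProd (listPow w n) = wordProd w ^ n := by
  induction n with
  | zero => simp [listPow]
  | succ n ih => rw [listPow, wordProd_append, ih, pow_succ']

theorem surjective_wordProd (hsym : ∀ x ∈ X, x⁻¹ ∈ X) (hgen : Subgroup.closure X = ⊤) :
    Function.Surjective (wordProd : List X → G) := by
  intro g
  have hX : X ∪ X⁻¹ = X := Set.union_eq_left.2 fun x hx => by simpa using hsym _ hx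
  have hg : g ∈ Submonoid.closure X := by
    rw [← hX, ← Subgroup.closure_toSubmonoid, hgen]
    trivial
  obtain ⟨l, hlX, rfl⟩ := Submonoid.exists_list_of_mem_closure hg
  exact ⟨l.attachWith (· ∈ X) hlX, by simp [wordProd]⟩

/-- Junk value `0` (as `sInf ∅`) at elements not represented by any word over `X`. -/
noncomputable def wordLength (X : Set G) (g : G) : ℕ :=
  sInf (List.length '' {w : List X | wordProd w = g})

theorem wordLength_le (w : List X) : wordLength X (wordProd w) ≤ w.length :=
  Nat.sInf_le ⟨w, rfl, rfl⟩

theorem exists_wordProd_eq_length_eq (w : List X) :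
    ∃ v : List X, wordProd v = wordProd w ∧ v.length = wordLength X (wordProd w) := by
  obtain ⟨v, hv, hlen⟩ := Nat.sInf_mem
    (⟨_, w, rfl, rfl⟩ : (List.length '' {v : List X | wordProd v = wordProd w}).Nonempty)
  exact ⟨v, hv, hlen⟩

theorem mem_geo_iff {w : List X} : w ∈ Geo X ↔ w.length = wordLength X (wordProd w) := by
  refine ⟨fun hw => ?_, fun h v hv => h ▸ hv ▸ wordLength_le v⟩
  obtain ⟨v, hv, hlen⟩ := exists_wordProd_eq_length_eq w
  exact le_antisymm (hlen ▸ hw v hv) (wordLength_le w)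

theorem wordLength_one : wordLength X 1 = 0 :=
  Nat.le_zero.1 (wordLength_le [])

theorem wordLength_mul_le (hX : Function.Surjective (wordProd : List X → G)) (a b : G) :
    wordLength X (a * b) ≤ wordLength X a + wordLength X b := by
  obtain ⟨u, rfl⟩ := hX a
  obtain ⟨v, rfl⟩ := hX b
  obtain ⟨u', hu, hu'⟩ := exists_wordProd_eq_length_eq u
  obtain ⟨v', hv, hv'⟩ := exists_wordProd_eq_length_eq v
  simpa [hu, hv, hu', hv'] using wordLength_le (u' ++ v')

theorem eq_one_of_wordLength_eq_zero (hX : Function.Surjective (wordProd : List X → G)) {g : G}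
    (hg : wordLength X g = 0) : g = 1 := by
  obtain ⟨w, rfl⟩ := hX g
  obtain ⟨v, hv, hlen⟩ := exists_wordProd_eq_length_eq w
  rw [hg, List.length_eq_zero_iff] at hlen
  simp [← hv, hlen]

theorem finite_setOf_wordLength_le [Finite X] (hX : Function.Surjective (wordProd : List X → G))
    (n : ℕ) : {g | wordLength X g ≤ n}.Finite := by
  refine ((List.finite_length_le X n).image wordProd).subset fun g hg => ?_
  obtain ⟨w, rfl⟩ := hX g
  obtain ⟨v, hv, hlen⟩ := exists_wordProd_eq_length_eq w
  exact ⟨v, by rwa [Set.mem_ofPred_eq, hlen], hv⟩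

theorem wordLength_pow (hidem : ∀ w : List X, w ≠ [] → SynCong (Geo X) w (w ++ w))
    (hX : Function.Surjective (wordProd : List X → G)) (g : G) (n : ℕ) :
    wordLength X (g ^ n) = n * wordLength X g := by
  obtain ⟨w, rfl⟩ := hX g
  obtain ⟨v, hv, hlen⟩ := exists_wordProd_eq_length_eq w
  rw [← hv] at hlen ⊢
  rw [← hlen]
  rcases eq_or_ne v [] with rfl | hne
  · simp [wordLength_one]
  cases n with
  | zero => simp [wordLength_one]
  | succ n =>
    have hgeo := listPow_succ_mem_of_synCong (hidem v hne) (mem_geo_iff.2 hlen) n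
    rw [mem_geo_iff, wordProd_listPow, length_listPow] at hgeo
    exact hgeo.symm

end WordLength

/-- If the syntactic semigroup of `Geo(G,X)` is idempotent (every nonempty word `w`
is syntactically congruent to `w²`), then `G` is free abelian. -/
theorem stmt1 {G : Type*} [Group G] (X : Set G)
    (hfin : X.Finite) (hsym : ∀ x ∈ X, x⁻¹ ∈ X) (hgen : Subgroup.closure X = ⊤)
    (hidem : ∀ w : List X, w ≠ [] → SynCong (Geo X) w (w ++ w)) :
    ∃ n : ℕ, Nonempty (G ≃* Multiplicative (Fin n → ℤ)) := by
  have hX := surjective_wordProd hsym hgen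
  have : Finite X := hfin.to_subtype
  have : Group.FG G := ⟨⟨hfin.toFinset, by rwa [hfin.coe_toFinset]⟩⟩
  exact exists_mulEquiv_multiplicative_fin_pi_int_of_homogeneous (wordLength_mul_le hX)
    (wordLength_pow hidem hX) (fun _ => eq_one_of_wordLength_eq_zero hX)
    (finite_setOf_wordLength_le hX)
end

section
/- Let G be the free abelian group with basis y₁, …, y_n (so G ≅ ℤⁿ) and let X = {y₁, y₁⁻¹, …, y_n, y_n⁻¹}. Then a word w over X is geodesic if and only if there exist signs ε₁, …, ε_n ∈ {1, −1} such that every letter occurring in w lies in {y₁^{ε₁}, …, y_n^{ε_n}}. Consequently Geo(G,X) is 1-locally testable. -/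
/-- The free abelian group of rank `n`, written multiplicatively. -/
abbrev FreeAb (n : ℕ) := Multiplicative (Fin n → ℤ)

/-- The standard basis elements `y₁, …, y_n` of the free abelian group of rank `n`. -/
abbrev yGen (n : ℕ) (i : Fin n) : FreeAb n := Multiplicative.ofAdd (Pi.single i 1)

/-- The symmetric generating set `X = {y₁, y₁⁻¹, …, y_n, y_n⁻¹}`. -/
def XFreeAb (n : ℕ) : Set (FreeAb n) :=
  {g | ∃ i : Fin n, g = yGen n i ∨ g = (yGen n i)⁻¹}


/-! A homomorphism `φ : G → ℤ` with `φ ≤ 1` on the generators bounds word length from below,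
so a word all of whose letters have `φ`-value `1` is geodesic. For signs `ε`, the homomorphism
`g ↦ ∑ εᵢ gᵢ` on `ℤⁿ` does this for every word over `{y₁^{ε₁}, …, y_n^{ε_n}}`. Conversely, a
word containing both `yᵢ` and `yᵢ⁻¹` gets two letters shorter when they are cancelled, by
commutativity. The criterion depends only on the set of letters, hence `1`-local testability. -/

open Multiplicative

section Words

variable {G : Type*} [Group G] {X : Set G}

lemma wordProd_cons (x : X) (w : List X) : wordProd (x :: w) = (x : G) * wordProd w :=
  List.prod_cons

lemma toAdd_wordProd (φ : G →* Multiplicative ℤ) (w : List X) :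
    toAdd (φ (wordProd w)) = (w.map fun x : X => toAdd (φ x)).sum := by
  induction w with
  | nil => simp [wordProd]
  | cons x w ih => simp [wordProd_cons, ih]

lemma toAdd_wordProd_le_length (φ : G →* Multiplicative ℤ) (hφ : ∀ x ∈ X, toAdd (φ x) ≤ 1)
    (w : List X) : toAdd (φ (wordProd w)) ≤ w.length := by
  rw [toAdd_wordProd]
  have hletter : ∀ k ∈ w.map fun x : X => toAdd (φ x), k ≤ 1 := by
    simp only [List.mem_map]
    rintro _ ⟨x, -, rfl⟩
    exact hφ x x.2
  simpa using List.sum_le_card_nsmul _ 1 hletter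

lemma toAdd_wordProd_eq_length (φ : G →* Multiplicative ℤ) (w : List X)
    (hw : ∀ x ∈ w, toAdd (φ x) = 1) : toAdd (φ (wordProd w)) = w.length := by
  rw [toAdd_wordProd, List.map_congr_left hw]
  simp

lemma isGeodesic_of_toAdd_eq_one (φ : G →* Multiplicative ℤ) (hφ : ∀ x ∈ X, toAdd (φ x) ≤ 1)
    (w : List X) (hw : ∀ x ∈ w, toAdd (φ x) = 1) : IsGeodesic X w := fun v hv => by
  have := toAdd_wordProd_le_length φ hφ v
  rw [hv, toAdd_wordProd_eq_length φ w hw] at this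
  exact_mod_cast this

lemma not_isGeodesic_of_mul_eq_one {G : Type*} [CommGroup G] {X : Set G} {w : List X}
    {a b : X} (ha : a ∈ w) (hb : b ∈ w) (hab : a ≠ b) (hmul : (a : G) * b = 1) :
    ¬ IsGeodesic X w := by
  classical
  set rest := (w.erase a).erase b
  have hperm : w.Perm (a :: b :: rest) :=
    (List.perm_cons_erase ha).trans
      ((List.perm_cons_erase ((List.mem_erase_of_ne hab.symm).mpr hb)).cons a)
  have hprod : wordProd rest = wordProd w := by
    rw [wordProd, wordProd, (hperm.map Subtype.val).prod_eq]
    simp [← mul_assoc, hmul]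
  intro hgeo
  have := hgeo rest hprod
  simp [hperm.length_eq] at this

end Words

lemma mem_iff_mem_of_simK_one {A : Type*} {u v : List A} (h : SimK 1 u v) (x : A) :
    x ∈ u ↔ x ∈ v := by
  simpa [List.singleton_infix_iff] using h.2.2 [x] rfl

lemma locallyTestable_one_of_mem_iff {A : Type*} {L : Set (List A)}
    (hL : ∀ u v : List A, (∀ x, x ∈ u ↔ x ∈ v) → (u ∈ L ↔ v ∈ L)) : LocallyTestable 1 L :=
  fun u v h => hL u v (mem_iff_mem_of_simK_one h)

section FreeAbelian

variable {n : ℕ}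

def signChar (ε : Fin n → ℤ) : FreeAb n →* Multiplicative ℤ :=
  AddMonoidHom.toMultiplicative
    (AddMonoidHom.mk' (fun g => ∑ i, ε i * g i) fun g h => by
      simp [mul_add, Finset.sum_add_distrib])

lemma toAdd_signChar (ε : Fin n → ℤ) (g : FreeAb n) :
    toAdd (signChar ε g) = ∑ i, ε i * toAdd g i := rfl

lemma toAdd_signChar_yGen_zpow (ε : Fin n → ℤ) (i : Fin n) (k : ℤ) :
    toAdd (signChar ε (yGen n i ^ k)) = ε i * k := by
  simp [toAdd_signChar, Pi.single_apply, mul_comm]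

lemma toAdd_signChar_le_one {ε : Fin n → ℤ} (hε : ∀ i, ε i = 1 ∨ ε i = -1) :
    ∀ x ∈ XFreeAb n, toAdd (signChar ε x) ≤ 1 := by
  have hpow : ∀ i (k : ℤ), (k = 1 ∨ k = -1) → toAdd (signChar ε (yGen n i ^ k)) ≤ 1 := by
    intro i k hk
    rw [toAdd_signChar_yGen_zpow]
    rcases hε i with h | h <;> rcases hk with rfl | rfl <;> simp [h]
  rintro _ ⟨i, rfl | rfl⟩
  · simpa using hpow i 1 (.inl rfl)
  · simpa using hpow i (-1) (.inr rfl)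

lemma yGen_ne_inv (i : Fin n) : yGen n i ≠ (yGen n i)⁻¹ := by
  intro h
  have := congrArg (fun g : FreeAb n => toAdd g i) h
  simp at this

lemma isGeodesic_of_signs {ε : Fin n → ℤ} (hε : ∀ i, ε i = 1 ∨ ε i = -1)
    {w : List (XFreeAb n)} (hw : ∀ x ∈ w, ∃ i : Fin n, (x : FreeAb n) = yGen n i ^ ε i) :
    IsGeodesic (XFreeAb n) w := by
  refine isGeodesic_of_toAdd_eq_one (signChar ε) (toAdd_signChar_le_one hε) w fun x hx => ?_
  obtain ⟨i, hi⟩ := hw x hx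
  rw [hi, toAdd_signChar_yGen_zpow]
  rcases hε i with h | h <;> simp [h]

lemma exists_signs_of_isGeodesic {w : List (XFreeAb n)} (hw : IsGeodesic (XFreeAb n) w) :
    ∃ ε : Fin n → ℤ, (∀ i, ε i = 1 ∨ ε i = -1) ∧
      ∀ x ∈ w, ∃ i : Fin n, (x : FreeAb n) = yGen n i ^ ε i := by
  classical
  let ε : Fin n → ℤ := fun i => if ∃ x ∈ w, (x : FreeAb n) = (yGen n i)⁻¹ then -1 else 1
  refine ⟨ε, fun i => by unfold ε; split_ifs <;> simp, ?_⟩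
  rintro x hx
  obtain ⟨i, hi | hi⟩ := x.2
  · refine ⟨i, ?_⟩
    have hnot : ¬ ∃ y ∈ w, (y : FreeAb n) = (yGen n i)⁻¹ := by
      rintro ⟨y, hy, hyi⟩
      refine not_isGeodesic_of_mul_eq_one hx hy (fun h => yGen_ne_inv i ?_) ?_ hw
      · simpa [hi, hyi] using congrArg Subtype.val h
      · rw [hi, hyi, mul_inv_cancel]
    rw [show ε i = 1 from if_neg hnot, zpow_one, hi]
  · have hinv : ∃ y ∈ w, (y : FreeAb n) = (yGen n i)⁻¹ := ⟨x, hx, hi⟩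
    exact ⟨i, by rw [show ε i = -1 from if_pos hinv, zpow_neg_one, hi]⟩

lemma isGeodesic_iff_exists_signs (w : List (XFreeAb n)) :
    IsGeodesic (XFreeAb n) w ↔ ∃ ε : Fin n → ℤ, (∀ i, ε i = 1 ∨ ε i = -1) ∧
      ∀ x ∈ w, ∃ i : Fin n, (x : FreeAb n) = yGen n i ^ ε i :=
  ⟨exists_signs_of_isGeodesic, fun ⟨_, hε, hw⟩ => isGeodesic_of_signs hε hw⟩

end FreeAbelian

/-- In the free abelian group with basis `y₁, …, y_n` and generating set
`X = {y_i^{±1}}`, a word is geodesic iff all its letters lie in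
`{y₁^{ε₁}, …, y_n^{ε_n}}` for some choice of signs `ε_i ∈ {1, -1}`.
Consequently `Geo(G,X)` is 1-locally testable. -/
theorem stmt2 (n : ℕ) :
    (∀ w : List (XFreeAb n), IsGeodesic (XFreeAb n) w ↔
      ∃ ε : Fin n → ℤ, (∀ i, ε i = 1 ∨ ε i = -1) ∧
        ∀ x ∈ w, ∃ i : Fin n, (x : FreeAb n) = yGen n i ^ ε i) ∧
    LocallyTestable 1 (Geo (XFreeAb n)) := by
  refine ⟨isGeodesic_iff_exists_signs, locallyTestable_one_of_mem_iff fun u v huv => ?_⟩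
  simp only [Geo, Set.mem_ofPred_eq, isGeodesic_iff_exists_signs, huv]
end

section
/- A language L over a finite alphabet X is 1-locally testable if and only if its syntactic semigroup is idempotent and commutative, i.e. if and only if w ∼_L w² for every nonempty word w over X and uv ∼_L vu for all nonempty words u, v over X. -/
section SimK

variable {A : Type*}

theorem simK_one_iff {u v : List A} : SimK 1 u v ↔ ∀ a, a ∈ u ↔ a ∈ v := by
  simp only [SimK, Nat.sub_self, List.take_zero, Nat.sub_zero, List.drop_length, true_and,
    List.length_eq_one_iff]
  constructor
  · intro h a
    simpa only [List.singleton_infix_iff] using h [a] ⟨a, rfl⟩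
  · rintro h _ ⟨a, rfl⟩
    simpa only [List.singleton_infix_iff] using h a

theorem locallyTestable_one_iff {L : Set (List A)} :
    LocallyTestable 1 L ↔ ∀ u v : List A, (∀ a, a ∈ u ↔ a ∈ v) → (u ∈ L ↔ v ∈ L) := by
  simp only [LocallyTestable, simK_one_iff]

end SimK

namespace SynCong

variable {A : Type*} {L : Set (List A)} {u v w : List A}

theorem refl (u : List A) : SynCong L u u := fun _ _ => Iff.rfl

theorem symm (h : SynCong L u v) : SynCong L v u := fun s t => (h s t).symm

theorem trans (h₁ : SynCong L u v) (h₂ : SynCong L v w) : SynCong L u w :=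
  fun s t => (h₁ s t).trans (h₂ s t)

theorem append_left (x : List A) (h : SynCong L u v) : SynCong L (x ++ u) (x ++ v) :=
  fun s t => by simpa only [List.append_assoc] using h (s ++ x) t

theorem append_right (y : List A) (h : SynCong L u v) : SynCong L (u ++ y) (v ++ y) :=
  fun s t => by simpa only [List.append_assoc] using h s (y ++ t)

end SynCong

section IdempotentCommutative

variable {A : Type*} {L : Set (List A)}

theorem synCong_append_singleton_of_mem (hidem : ∀ w : List A, SynCong L w (w ++ w))
    (hcomm : ∀ u v : List A, SynCong L (u ++ v) (v ++ u)) {u : List A} {a : A} (ha : a ∈ u) :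
    SynCong L u (u ++ [a]) := by
  obtain ⟨p, q, rfl⟩ := List.append_of_mem ha
  have hqa : SynCong L (p ++ [a] ++ (q ++ [a])) (p ++ [a] ++ ([a] ++ q)) :=
    (hcomm q [a]).append_left _
  have haa : SynCong L (p ++ [a] ++ ([a] ++ q)) (p ++ [a] ++ q) := by
    simpa only [List.append_assoc] using (((hidem [a]).symm).append_left p).append_right q
  refine SynCong.symm ?_
  simpa only [List.append_assoc, List.cons_append, List.nil_append] using hqa.trans haa

theorem synCong_append_of_subset (hidem : ∀ w : List A, SynCong L w (w ++ w))
    (hcomm : ∀ u v : List A, SynCong L (u ++ v) (v ++ u)) {u v : List A} (hvu : v ⊆ u) :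
    SynCong L u (u ++ v) := by
  induction v with
  | nil => simpa only [List.append_nil] using SynCong.refl u
  | cons a v ih =>
    have hua : SynCong L u (u ++ [a]) :=
      synCong_append_singleton_of_mem hidem hcomm (hvu List.mem_cons_self)
    simpa only [List.append_assoc, List.singleton_append] using
      (ih (List.subset_of_cons_subset hvu)).trans (hua.append_right v)

theorem synCong_of_forall_mem_iff (hidem : ∀ w : List A, SynCong L w (w ++ w))
    (hcomm : ∀ u v : List A, SynCong L (u ++ v) (v ++ u)) {u v : List A}
    (huv : ∀ a, a ∈ u ↔ a ∈ v) : SynCong L u v :=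
  (synCong_append_of_subset hidem hcomm fun a ha => (huv a).2 ha).trans <|
    (hcomm u v).trans (synCong_append_of_subset hidem hcomm fun a ha => (huv a).1 ha).symm

end IdempotentCommutative

theorem stmt3_general {A : Type*} (L : Set (List A)) :
    LocallyTestable 1 L ↔
      ((∀ w : List A, w ≠ [] → SynCong L w (w ++ w)) ∧
       (∀ u v : List A, u ≠ [] → v ≠ [] → SynCong L (u ++ v) (v ++ u))) := by
  rw [locallyTestable_one_iff]
  constructor
  · intro hL
    refine ⟨fun w _ s t => hL _ _ fun a => ?_, fun u v _ _ s t => hL _ _ fun a => ?_⟩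
    · simp only [List.mem_append, or_self]
    · simp only [List.mem_append]; tauto
  · rintro ⟨hidem, hcomm⟩ u v huv
    have hidem' : ∀ w : List A, SynCong L w (w ++ w) := fun w => by
      rcases eq_or_ne w [] with rfl | hw
      · exact SynCong.refl _
      · exact hidem w hw
    have hcomm' : ∀ u v : List A, SynCong L (u ++ v) (v ++ u) := fun u v => by
      rcases eq_or_ne u [] with rfl | hu
      · simpa only [List.nil_append, List.append_nil] using SynCong.refl v
      rcases eq_or_ne v [] with rfl | hv
      · simpa only [List.nil_append, List.append_nil] using SynCong.refl u
      exact hcomm u v hu hv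
    simpa only [List.nil_append, List.append_nil] using
      synCong_of_forall_mem_iff hidem' hcomm' huv [] []

/-- A language over a finite alphabet is 1-locally testable iff its syntactic semigroup
is idempotent (`w ∼_L w²` for all nonempty `w`) and commutative (`uv ∼_L vu` for all
nonempty `u, v`). -/
theorem stmt3 {A : Type*} [Fintype A] (L : Set (List A)) :
    LocallyTestable 1 L ↔
      ((∀ w : List A, w ≠ [] → SynCong L w (w ++ w)) ∧
       (∀ u v : List A, u ≠ [] → v ≠ [] → SynCong L (u ++ v) (v ++ u))) :=
  stmt3_general L
end
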